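/- arXiv:2310.11376 — 2 statements merged into one kernel-verified Lean document; each statement's English description precedes it below -/
import Mathlib

section
/- Let E be a real separable Hilbert space, δ > 0 and t ≥ 0, and let m be a finite Borel measure on the interval [-δ,0]. Let η : [-δ,t] → E be strongly measurable with ∫_{-δ}^{t} ‖η(s)‖_E² ds < ∞, and let λ : [-δ,t] → ℝ be nonnegative and non-increasing. Then ∫_{0}^{t} λ(s) ‖η_δ(s)‖_E² ds ≤ m([-δ,0])² · ∫_{-δ}^{t} λ(s) ‖η(s)‖_E² ds. -/
/-!
Cauchy–Schwarz against `m`, together with `lam s ≤ lam (s + r)` for `r ≤ 0`, bounds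
`lam s * ‖η_δ s‖²` by `m(univ) * ∫ lam (s + r) ‖η (s + r)‖² m(dr)`. Integrating in `s`, Tonelli and
the translation invariance of Lebesgue measure produce the second factor `m(univ)`. Working with
`∫⁻` throughout avoids any measurability of `η_δ`: a real Bochner integral is always bounded by the
`∫⁻` of the positive part of its integrand.
-/

open MeasureTheory Set

open scoped ENNReal

theorem lintegral_sq_le_measure_univ_mul_lintegral_sq {α : Type*} [MeasurableSpace α]
    (μ : Measure α) {f : α → ℝ≥0∞} (hf : AEMeasurable f μ) :
    (∫⁻ a, f a ∂μ) ^ 2 ≤ μ univ * ∫⁻ a, f a ^ 2 ∂μ := by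
  have h := ENNReal.lintegral_mul_le_Lp_mul_Lq μ Real.HolderConjugate.two_two hf
    (aemeasurable_const : AEMeasurable (fun _ ↦ (1 : ℝ≥0∞)) μ)
  simp only [Pi.mul_apply, mul_one, ENNReal.one_rpow, lintegral_const, one_mul] at h
  calc (∫⁻ a, f a ∂μ) ^ 2
      ≤ ((∫⁻ a, f a ^ (2 : ℝ) ∂μ) ^ (1 / 2 : ℝ) * μ univ ^ (1 / 2 : ℝ)) ^ 2 := by gcongr
    _ = μ univ * ∫⁻ a, f a ^ 2 ∂μ := by
      rw [mul_pow, ← ENNReal.rpow_natCast, ← ENNReal.rpow_natCast, ← ENNReal.rpow_mul,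
        ← ENNReal.rpow_mul]
      norm_num
      exact mul_comm _ _

theorem enorm_integral_sq_le_measure_univ_mul {α E : Type*} [MeasurableSpace α]
    [NormedAddCommGroup E] [NormedSpace ℝ E] (μ : Measure α) (g : α → E) :
    ‖∫ a, g a ∂μ‖ₑ ^ 2 ≤ μ univ * ∫⁻ a, ‖g a‖ₑ ^ 2 ∂μ := by
  by_cases hg : Integrable g μ
  · calc ‖∫ a, g a ∂μ‖ₑ ^ 2 ≤ (∫⁻ a, ‖g a‖ₑ ∂μ) ^ 2 := by
          gcongr; exact enorm_integral_le_lintegral_enorm g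
      _ ≤ μ univ * ∫⁻ a, ‖g a‖ₑ ^ 2 ∂μ :=
          lintegral_sq_le_measure_univ_mul_lintegral_sq μ hg.1.enorm
  · simp [integral_undef hg]

theorem ofReal_mul_sq_norm_integral_le {α E : Type*} [MeasurableSpace α]
    [NormedAddCommGroup E] [NormedSpace ℝ E] (μ : Measure α) (g : α → E) {w : α → ℝ} {c : ℝ}
    (hw : ∀ᵐ a ∂μ, c ≤ w a) :
    ENNReal.ofReal (c * ‖∫ a, g a ∂μ‖ ^ 2)
      ≤ μ univ * ∫⁻ a, ENNReal.ofReal (w a) * ‖g a‖ₑ ^ 2 ∂μ := by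
  calc ENNReal.ofReal (c * ‖∫ a, g a ∂μ‖ ^ 2)
      = ENNReal.ofReal c * ‖∫ a, g a ∂μ‖ₑ ^ 2 := by
        rw [ENNReal.ofReal_mul' (by positivity), ENNReal.ofReal_pow (norm_nonneg _), ofReal_norm]
    _ ≤ ENNReal.ofReal c * (μ univ * ∫⁻ a, ‖g a‖ₑ ^ 2 ∂μ) := by
        gcongr; exact enorm_integral_sq_le_measure_univ_mul μ g
    _ = μ univ * ∫⁻ a, ENNReal.ofReal c * ‖g a‖ₑ ^ 2 ∂μ := by
        rw [lintegral_const_mul' _ _ ENNReal.ofReal_ne_top, mul_left_comm]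
    _ ≤ μ univ * ∫⁻ a, ENNReal.ofReal (w a) * ‖g a‖ₑ ^ 2 ∂μ := by
        gcongr 1
        refine lintegral_mono_ae ?_
        filter_upwards [hw] with a ha
        gcongr

theorem integral_le_toReal_lintegral_ofReal {α : Type*} [MeasurableSpace α] (μ : Measure α)
    (f : α → ℝ) : ∫ a, f a ∂μ ≤ (∫⁻ a, ENNReal.ofReal (f a) ∂μ).toReal := by
  by_cases hf : Integrable f μ
  · rw [integral_eq_lintegral_pos_part_sub_lintegral_neg_part hf]
    exact sub_le_self _ ENNReal.toReal_nonneg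
  · rw [integral_undef hf]
    exact ENNReal.toReal_nonneg

theorem lintegral_lintegral_add_eq_measure_univ_mul {G : Type*} [MeasurableSpace G] [AddGroup G]
    [MeasurableAdd₂ G] (μ ν : Measure G) [SFinite μ] [SFinite ν] [μ.IsAddRightInvariant]
    {F : G → ℝ≥0∞} (hF : AEMeasurable F μ) :
    ∫⁻ x, ∫⁻ y, F (x + y) ∂ν ∂μ = ν univ * ∫⁻ x, F x ∂μ := by
  have hF_add : AEMeasurable (fun z : G × G ↦ F (z.1 + z.2)) (μ.prod ν) :=
    hF.comp_fst.comp_quasiMeasurePreserving (measurePreserving_add_prod μ ν).quasiMeasurePreserving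
  rw [lintegral_lintegral_swap hF_add]
  simp only [lintegral_add_right_eq_self F, lintegral_const, mul_comm]

theorem integrableOn_mul_of_antitoneOn {f lam : ℝ → ℝ} {a b : ℝ} (hf : IntegrableOn f (Icc a b))
    (hlam_nonneg : ∀ s ∈ Icc a b, 0 ≤ lam s) (hlam_anti : AntitoneOn lam (Icc a b)) :
    IntegrableOn (fun s ↦ lam s * f s) (Icc a b) := by
  refine hf.bdd_mul (c := lam a)
    (aemeasurable_restrict_of_antitoneOn measurableSet_Icc hlam_anti).aestronglyMeasurable ?_
  filter_upwards [ae_restrict_mem measurableSet_Icc] with s hs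
  rw [Real.norm_of_nonneg (hlam_nonneg s hs)]
  exact hlam_anti ⟨le_rfl, hs.1.trans hs.2⟩ hs hs.1

section DelayedAverage

variable {E : Type*} [NormedAddCommGroup E] [NormedSpace ℝ E] {δ t : ℝ} {m : Measure ℝ}
  {η : ℝ → E} {lam : ℝ → ℝ}

theorem ofReal_mul_sq_norm_delayedAverage_le (hm : ∀ᵐ r ∂m, r ∈ Icc (-δ) 0)
    (hlam_anti : AntitoneOn lam (Icc (-δ) t)) {s : ℝ} (hs : s ∈ Icc 0 t) :
    ENNReal.ofReal (lam s * ‖∫ r, η (s + r) ∂m‖ ^ 2)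
      ≤ m univ * ∫⁻ r, (Icc (-δ) t).indicator
          (fun u ↦ ENNReal.ofReal (lam u) * ‖η u‖ₑ ^ 2) (s + r) ∂m := by
  have hshift : ∀ᵐ r ∂m, s + r ∈ Icc (-δ) t ∧ lam s ≤ lam (s + r) := by
    filter_upwards [hm] with r ⟨hδr, hr0⟩
    have hsr : s + r ∈ Icc (-δ) t := ⟨by linarith [hs.1], by linarith [hs.2]⟩
    exact ⟨hsr, hlam_anti hsr ⟨by linarith [hs.1], hs.2⟩ (by linarith)⟩
  refine (ofReal_mul_sq_norm_integral_le m (fun r ↦ η (s + r))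
    (hshift.mono fun r hr ↦ hr.2)).trans_eq ?_
  congr 1
  refine lintegral_congr_ae ?_
  filter_upwards [hshift] with r hr
  rw [indicator_of_mem hr.1]

theorem lintegral_ofReal_mul_sq_norm_delayedAverage_le [IsFiniteMeasure m]
    (hm : ∀ᵐ r ∂m, r ∈ Icc (-δ) 0) (hη_meas : AEStronglyMeasurable η (volume.restrict (Icc (-δ) t)))
    (hlam_anti : AntitoneOn lam (Icc (-δ) t)) :
    ∫⁻ s in Icc 0 t, ENNReal.ofReal (lam s * ‖∫ r, η (s + r) ∂m‖ ^ 2)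
      ≤ m univ ^ 2 * ∫⁻ u in Icc (-δ) t, ENNReal.ofReal (lam u) * ‖η u‖ₑ ^ 2 := by
  set F : ℝ → ℝ≥0∞ := (Icc (-δ) t).indicator fun u ↦ ENNReal.ofReal (lam u) * ‖η u‖ₑ ^ 2
  have hF_meas : AEMeasurable F volume := (aemeasurable_indicator_iff measurableSet_Icc).2 <|
    (aemeasurable_restrict_of_antitoneOn measurableSet_Icc hlam_anti).ennreal_ofReal.mul
      (hη_meas.enorm.pow_const 2)
  calc ∫⁻ s in Icc 0 t, ENNReal.ofReal (lam s * ‖∫ r, η (s + r) ∂m‖ ^ 2)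
      ≤ ∫⁻ s in Icc 0 t, m univ * ∫⁻ r, F (s + r) ∂m :=
        setLIntegral_mono' measurableSet_Icc fun s hs ↦
          ofReal_mul_sq_norm_delayedAverage_le hm hlam_anti hs
    _ ≤ ∫⁻ s, m univ * ∫⁻ r, F (s + r) ∂m := setLIntegral_le_lintegral _ _
    _ = m univ ^ 2 * ∫⁻ u in Icc (-δ) t, ENNReal.ofReal (lam u) * ‖η u‖ₑ ^ 2 := by
        rw [lintegral_const_mul' _ _ (measure_ne_top m univ),
          lintegral_lintegral_add_eq_measure_univ_mul volume m hF_meas,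
          lintegral_indicator measurableSet_Icc, ← mul_assoc, pow_two]

end DelayedAverage

theorem delayed_moving_average_estimate_general
    {E : Type*} [NormedAddCommGroup E] [InnerProductSpace ℝ E]
    (δ t : ℝ)
    (m : Measure ℝ) [IsFiniteMeasure m] (hm : m (Set.Icc (-δ) 0)ᶜ = 0)
    (η : ℝ → E)
    (hη_meas : AEStronglyMeasurable η (volume.restrict (Set.Icc (-δ) t)))
    (hη_int : IntegrableOn (fun s => ‖η s‖ ^ 2) (Set.Icc (-δ) t))
    (lam : ℝ → ℝ)
    (hlam_nonneg : ∀ s ∈ Set.Icc (-δ) t, 0 ≤ lam s)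
    (hlam_anti : AntitoneOn lam (Set.Icc (-δ) t)) :
    ∫ s in Set.Icc 0 t, lam s * ‖∫ r, η (s + r) ∂m‖ ^ 2
      ≤ (m (Set.Icc (-δ) 0)).toReal ^ 2 * ∫ s in Set.Icc (-δ) t, lam s * ‖η s‖ ^ 2 := by
  have hintegrand_nonneg : ∀ s ∈ Icc (-δ) t, 0 ≤ lam s * ‖η s‖ ^ 2 := fun s hs ↦
    mul_nonneg (hlam_nonneg s hs) (by positivity)
  have hmass : m univ = m (Icc (-δ) 0) := by
    rw [← measure_add_measure_compl measurableSet_Icc, hm, add_zero]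
  have hrhs : ∫⁻ u in Icc (-δ) t, ENNReal.ofReal (lam u) * ‖η u‖ₑ ^ 2
      = ENNReal.ofReal (∫ s in Icc (-δ) t, lam s * ‖η s‖ ^ 2) := by
    rw [ofReal_integral_eq_lintegral_ofReal
      (integrableOn_mul_of_antitoneOn hη_int hlam_nonneg hlam_anti)
      ((ae_restrict_mem measurableSet_Icc).mono hintegrand_nonneg)]
    refine lintegral_congr fun u ↦ ?_
    rw [ENNReal.ofReal_mul' (by positivity), ENNReal.ofReal_pow (norm_nonneg _), ofReal_norm]
  calc ∫ s in Icc 0 t, lam s * ‖∫ r, η (s + r) ∂m‖ ^ 2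
      ≤ (∫⁻ s in Icc 0 t, ENNReal.ofReal (lam s * ‖∫ r, η (s + r) ∂m‖ ^ 2)).toReal :=
        integral_le_toReal_lintegral_ofReal _ _
    _ ≤ (m univ ^ 2 * ∫⁻ u in Icc (-δ) t, ENNReal.ofReal (lam u) * ‖η u‖ₑ ^ 2).toReal :=
        ENNReal.toReal_mono (by simp [hrhs, ENNReal.mul_eq_top])
          (lintegral_ofReal_mul_sq_norm_delayedAverage_le (ae_iff.2 hm) hη_meas hlam_anti)
    _ = (m (Icc (-δ) 0)).toReal ^ 2 * ∫ s in Icc (-δ) t, lam s * ‖η s‖ ^ 2 := by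
        rw [hrhs, hmass, ENNReal.toReal_mul, ENNReal.toReal_pow, ENNReal.toReal_ofReal
          (setIntegral_nonneg measurableSet_Icc hintegrand_nonneg)]

/-- Lemma 3.2 of the paper. For a finite Borel measure `m` supported on
`[-δ, 0]`, an `L²` function `η` on `[-δ, t]` with values in a real separable Hilbert space,
and a nonnegative non-increasing weight `lam`, the delayed moving average
`η_δ(s) = ∫ η(s+r) m(dr)` satisfies
`∫_0^t lam(s) ‖η_δ(s)‖² ds ≤ m([-δ,0])² ∫_{-δ}^t lam(s) ‖η(s)‖² ds`. -/
theorem delayed_moving_average_estimate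
    {E : Type*} [NormedAddCommGroup E] [InnerProductSpace ℝ E] [CompleteSpace E]
    [TopologicalSpace.SeparableSpace E]
    (δ t : ℝ) (hδ : 0 < δ) (ht : 0 ≤ t)
    (m : Measure ℝ) [IsFiniteMeasure m] (hm : m (Set.Icc (-δ) 0)ᶜ = 0)
    (η : ℝ → E)
    (hη_meas : AEStronglyMeasurable η (volume.restrict (Set.Icc (-δ) t)))
    (hη_int : IntegrableOn (fun s => ‖η s‖ ^ 2) (Set.Icc (-δ) t))
    (lam : ℝ → ℝ)
    (hlam_nonneg : ∀ s ∈ Set.Icc (-δ) t, 0 ≤ lam s)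
    (hlam_anti : AntitoneOn lam (Set.Icc (-δ) t)) :
    ∫ s in Set.Icc 0 t, lam s * ‖∫ r, η (s + r) ∂m‖ ^ 2
      ≤ (m (Set.Icc (-δ) 0)).toReal ^ 2 * ∫ s in Set.Icc (-δ) t, lam s * ‖η s‖ ^ 2 :=
  delayed_moving_average_estimate_general δ t m hm η hη_meas hη_int lam hlam_nonneg hlam_anti
end

section
/- Let E be a real separable Hilbert space, δ > 0, T > 0, and let m be a finite Borel measure on the interval [-δ,0]. Let η : [-δ,T] → E be strongly measurable with ∫_{-δ}^{T} ‖η(s)‖_E² ds < ∞ and with η(s) = 0 for almost every s ∈ [-δ,0); let g : [0,T+δ] → E be strongly measurable with ∫_{0}^{T+δ} ‖g(s)‖_E² ds < ∞ and with g(s) = 0 for almost every s ∈ (T, T+δ]. Then ∫_{0}^{T} ⟨η_δ(t), g(t)⟩_E dt = ∫_{0}^{T} ⟨η(t), g_{δ+}(t)⟩_E dt. -/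
/-! Both sides equal `∫_t ∫_s ⟪η (t + s), g t⟫ dm(s) dt`: after Fubini, the substitution
`t ↦ t - s`, which preserves Lebesgue measure, turns `⟪η (t + s), g t⟫` into `⟪η t, g (t - s)⟫`.
Fubini applies once `η` and `g` are replaced by their restrictions to `[0, T]`, which are in
`L²(ℝ)`; because `m` lives on `[-δ, 0]`, the vanishing conditions say exactly that this
replacement changes neither moving average at almost every `t ∈ [0, T]`. -/

open MeasureTheory
open scoped RealInnerProductSpace

namespace MeasureTheory

section

variable {α β E : Type*} {mα : MeasurableSpace α} {mβ : MeasurableSpace β}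
  [NormedAddCommGroup E] {μ : Measure α}

theorem MemLp.integrable_inner [InnerProductSpace ℝ E] {f g : α → E} (hf : MemLp f 2 μ)
    (hg : MemLp g 2 μ) : Integrable (fun x => ⟪f x, g x⟫) μ :=
  (L2.integrable_inner (𝕜 := ℝ) hf.toLp hg.toLp).congr <| by
    filter_upwards [hf.coeFn_toLp, hg.coeFn_toLp] with x hfx hgx
    rw [hfx, hgx]

theorem MemLp.integrable_prod_right_ae [SFinite μ] {ν : Measure β} [IsFiniteMeasure ν]
    {f : α × β → E} (hf : MemLp f 2 (μ.prod ν)) :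
    ∀ᵐ x ∂μ, Integrable (fun y => f (x, y)) ν := by
  have hsq := ((memLp_two_iff_integrable_sq_norm hf.1).1 hf).prod_right_ae
  filter_upwards [hf.1.prodMk_left, hsq] with x hmeas hx
  exact ((memLp_two_iff_integrable_sq_norm hmeas).2 hx).integrable one_le_two

theorem memLp_two_indicator_of_integrableOn_sq_norm {f : α → E} {I J : Set α}
    (hI : MeasurableSet I) (hIJ : I ⊆ J) (hf : AEStronglyMeasurable f (μ.restrict J))
    (hf2 : IntegrableOn (fun x => ‖f x‖ ^ 2) J μ) : MemLp (I.indicator f) 2 μ :=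
  (memLp_indicator_iff_restrict hI).2 <|
    ((memLp_two_iff_integrable_sq_norm hf).2 hf2).mono_measure (Measure.restrict_mono_set μ hIJ)

theorem ae_eq_indicator_of_ae_restrict_eq_zero {f : α → E} {I D : Set α} (hD : MeasurableSet D)
    (hf : ∀ᵐ x ∂μ.restrict D, f x = 0) : ∀ᵐ x ∂μ, x ∈ I ∪ D → f x = I.indicator f x := by
  filter_upwards [(ae_restrict_iff' hD).1 hf] with x hx hxID
  by_cases hxI : x ∈ I
  · rw [Set.indicator_of_mem hxI]
  · rw [Set.indicator_of_notMem hxI, hx (hxID.resolve_left hxI)]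

end

section MovingAverage

variable {G E : Type*} [MeasurableSpace G] [AddGroup G] [NormedAddCommGroup E] [NormedSpace ℝ E]

/-- The paper's `φ_δ`; `anticipatedAverage m φ` is its `φ_{δ+}`. -/
noncomputable def delayedAverage (m : Measure G) (φ : G → E) (t : G) : E := ∫ s, φ (t + s) ∂m

noncomputable def anticipatedAverage (m : Measure G) (φ : G → E) (t : G) : E := ∫ s, φ (t - s) ∂m

end MovingAverage

section Translation

variable {G E : Type*} [MeasurableSpace G] [AddGroup G] [MeasurableAdd₂ G] [NormedAddCommGroup E]
  {μ : Measure G} [SFinite μ] [μ.IsAddRightInvariant] (m : Measure G)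

theorem ae_delayedAverage_congr [SFinite m] [NormedSpace ℝ E] {f f' : G → E} {J : Set G}
    (h : ∀ᵐ x ∂μ, x ∈ J → f x = f' x) :
    ∀ᵐ t ∂μ, (∀ᵐ s ∂m, t + s ∈ J) → delayedAverage m f t = delayedAverage m f' t := by
  have hslices := Measure.ae_ae_of_ae_prod <| (Measure.quasiMeasurePreserving_fst.comp
    (measurePreserving_add_prod μ m).quasiMeasurePreserving).ae h
  filter_upwards [hslices] with t ht hJ
  exact integral_congr_ae (by filter_upwards [ht, hJ] with s hs hsJ using hs hsJ)

theorem ae_anticipatedAverage_congr [MeasurableNeg G] [SFinite m] [NormedSpace ℝ E]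
    {f f' : G → E} {J : Set G} (h : ∀ᵐ x ∂μ, x ∈ J → f x = f' x) :
    ∀ᵐ t ∂μ, (∀ᵐ s ∂m, t - s ∈ J) → anticipatedAverage m f t = anticipatedAverage m f' t := by
  have hslices := Measure.ae_ae_of_ae_prod <| (Measure.quasiMeasurePreserving_fst.comp
    (measurePreserving_sub_prod μ m).quasiMeasurePreserving).ae h
  filter_upwards [hslices] with t ht hJ
  exact integral_congr_ae (by filter_upwards [ht, hJ] with s hs hsJ using hs hsJ)

variable [IsFiniteMeasure m] {p : ENNReal} {φ : G → E}

theorem MemLp.comp_add_prod (hφ : MemLp φ p μ) :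
    MemLp (fun z : G × G => φ (z.1 + z.2)) p (μ.prod m) :=
  (hφ.comp_fst m).comp_measurePreserving (measurePreserving_add_prod μ m)

variable [MeasurableNeg G]

theorem MemLp.comp_sub_prod (hφ : MemLp φ p μ) :
    MemLp (fun z : G × G => φ (z.1 - z.2)) p (μ.prod m) :=
  (hφ.comp_fst m).comp_measurePreserving (measurePreserving_sub_prod μ m)

variable [InnerProductSpace ℝ E] {F H : G → E}

theorem integral_integral_inner_add_eq (hF : MemLp F 2 μ) (hH : MemLp H 2 μ) :
    ∫ t, ∫ s, ⟪F (t + s), H t⟫ ∂m ∂μ = ∫ t, ∫ s, ⟪F t, H (t - s)⟫ ∂m ∂μ := by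
  have hleft := (hF.comp_add_prod m).integrable_inner (hH.comp_fst m)
  have hright := (hF.comp_fst m).integrable_inner (hH.comp_sub_prod m)
  calc ∫ t, ∫ s, ⟪F (t + s), H t⟫ ∂m ∂μ = ∫ s, ∫ t, ⟪F (t + s), H t⟫ ∂μ ∂m :=
        integral_integral_swap hleft
    _ = ∫ s, ∫ t, ⟪F t, H (t - s)⟫ ∂μ ∂m := by
        congr 1 with s
        simpa using (integral_sub_right_eq_self (fun t => ⟪F (t + s), H t⟫) s).symm
    _ = ∫ t, ∫ s, ⟪F t, H (t - s)⟫ ∂m ∂μ := (integral_integral_swap hright).symm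

theorem integral_inner_delayedAverage [CompleteSpace E] (hF : MemLp F 2 μ) (hH : MemLp H 2 μ) :
    ∫ t, ⟪delayedAverage m F t, H t⟫ ∂μ = ∫ t, ⟪F t, anticipatedAverage m H t⟫ ∂μ := by
  calc ∫ t, ⟪delayedAverage m F t, H t⟫ ∂μ = ∫ t, ∫ s, ⟪F (t + s), H t⟫ ∂m ∂μ := by
        refine integral_congr_ae ?_
        filter_upwards [(hF.comp_add_prod m).integrable_prod_right_ae] with t ht
        rw [delayedAverage, real_inner_comm, ← integral_inner ht]
        congr 1 with s
        exact real_inner_comm _ _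
    _ = ∫ t, ∫ s, ⟪F t, H (t - s)⟫ ∂m ∂μ := integral_integral_inner_add_eq m hF hH
    _ = ∫ t, ⟪F t, anticipatedAverage m H t⟫ ∂μ := by
        refine integral_congr_ae ?_
        filter_upwards [(hH.comp_sub_prod m).integrable_prod_right_ae] with t ht
        rw [anticipatedAverage, integral_inner ht]

theorem setIntegral_inner_delayedAverage_indicator [CompleteSpace E] {I : Set G}
    (hI : MeasurableSet I) (hF : MemLp (I.indicator F) 2 μ) (hH : MemLp (I.indicator H) 2 μ) :
    ∫ t in I, ⟪delayedAverage m (I.indicator F) t, H t⟫ ∂μ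
      = ∫ t in I, ⟪F t, anticipatedAverage m (I.indicator H) t⟫ ∂μ := calc
  _ = ∫ t in I, ⟪delayedAverage m (I.indicator F) t, I.indicator H t⟫ ∂μ :=
      setIntegral_congr_fun hI fun t ht => by rw [Set.indicator_of_mem ht]
  _ = ∫ t, ⟪delayedAverage m (I.indicator F) t, I.indicator H t⟫ ∂μ :=
      setIntegral_eq_integral_of_forall_compl_eq_zero fun t ht => by
        rw [Set.indicator_of_notMem ht, inner_zero_right]
  _ = ∫ t, ⟪I.indicator F t, anticipatedAverage m (I.indicator H) t⟫ ∂μ :=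
      integral_inner_delayedAverage m hF hH
  _ = ∫ t in I, ⟪I.indicator F t, anticipatedAverage m (I.indicator H) t⟫ ∂μ :=
      (setIntegral_eq_integral_of_forall_compl_eq_zero fun t ht => by
        rw [Set.indicator_of_notMem ht, inner_zero_left]).symm
  _ = _ := setIntegral_congr_fun hI fun t ht => by rw [Set.indicator_of_mem ht]

end Translation

end MeasureTheory

section Interval

variable {E : Type*} [NormedAddCommGroup E] [NormedSpace ℝ E] {δ T : ℝ} {m : Measure ℝ}
  [SFinite m] {φ : ℝ → E}

theorem ae_delayedAverage_eq_indicator_Icc (hm : ∀ᵐ s ∂m, s ∈ Set.Icc (-δ) 0)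
    (hφ : ∀ᵐ s ∂(volume.restrict (Set.Ico (-δ) 0)), φ s = 0) :
    ∀ᵐ t, t ∈ Set.Icc 0 T →
      delayedAverage m φ t = delayedAverage m ((Set.Icc 0 T).indicator φ) t := by
  filter_upwards [ae_delayedAverage_congr m
    (ae_eq_indicator_of_ae_restrict_eq_zero measurableSet_Ico hφ)] with t ht htI
  refine ht ?_
  filter_upwards [hm] with s hs
  rcases le_or_gt 0 (t + s) with h | h
  · exact Or.inl ⟨h, by linarith [hs.2, htI.2]⟩
  · exact Or.inr ⟨by linarith [hs.1, htI.1], h⟩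

theorem ae_anticipatedAverage_eq_indicator_Icc (hm : ∀ᵐ s ∂m, s ∈ Set.Icc (-δ) 0)
    (hφ : ∀ᵐ s ∂(volume.restrict (Set.Ioc T (T + δ))), φ s = 0) :
    ∀ᵐ t, t ∈ Set.Icc 0 T →
      anticipatedAverage m φ t = anticipatedAverage m ((Set.Icc 0 T).indicator φ) t := by
  filter_upwards [ae_anticipatedAverage_congr m
    (ae_eq_indicator_of_ae_restrict_eq_zero measurableSet_Ioc hφ)] with t ht htI
  refine ht ?_
  filter_upwards [hm] with s hs
  rcases le_or_gt (t - s) T with h | h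
  · exact Or.inl ⟨by linarith [hs.2, htI.1], h⟩
  · exact Or.inr ⟨h, by linarith [hs.1, htI.2]⟩

end Interval

theorem delay_anticipation_duality_general
    {E : Type*} [NormedAddCommGroup E] [InnerProductSpace ℝ E] [CompleteSpace E]
    (δ T : ℝ) (hδ : 0 < δ)
    (m : Measure ℝ) [IsFiniteMeasure m] (hm : m (Set.Icc (-δ) 0)ᶜ = 0)
    (η : ℝ → E)
    (hη_meas : AEStronglyMeasurable η (volume.restrict (Set.Icc (-δ) T)))
    (hη_int : IntegrableOn (fun s => ‖η s‖ ^ 2) (Set.Icc (-δ) T))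
    (hη_zero : ∀ᵐ s ∂(volume.restrict (Set.Ico (-δ) 0)), η s = 0)
    (g : ℝ → E)
    (hg_meas : AEStronglyMeasurable g (volume.restrict (Set.Icc 0 (T + δ))))
    (hg_int : IntegrableOn (fun s => ‖g s‖ ^ 2) (Set.Icc 0 (T + δ)))
    (hg_zero : ∀ᵐ s ∂(volume.restrict (Set.Ioc T (T + δ))), g s = 0) :
    ∫ t in Set.Icc 0 T, ⟪∫ s, η (t + s) ∂m, g t⟫
      = ∫ t in Set.Icc 0 T, ⟪η t, ∫ s, g (t - s) ∂m⟫ := by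
  have hm_ae : ∀ᵐ s ∂m, s ∈ Set.Icc (-δ) 0 := hm
  have hη2 : MemLp ((Set.Icc 0 T).indicator η) 2 :=
    memLp_two_indicator_of_integrableOn_sq_norm measurableSet_Icc
      (Set.Icc_subset_Icc (by linarith) le_rfl) hη_meas hη_int
  have hg2 : MemLp ((Set.Icc 0 T).indicator g) 2 :=
    memLp_two_indicator_of_integrableOn_sq_norm measurableSet_Icc
      (Set.Icc_subset_Icc le_rfl (by linarith)) hg_meas hg_int
  calc ∫ t in Set.Icc 0 T, ⟪delayedAverage m η t, g t⟫
      = ∫ t in Set.Icc 0 T, ⟪delayedAverage m ((Set.Icc 0 T).indicator η) t, g t⟫ := by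
        refine setIntegral_congr_ae measurableSet_Icc ?_
        filter_upwards [ae_delayedAverage_eq_indicator_Icc hm_ae hη_zero] with t h ht
        rw [h ht]
    _ = ∫ t in Set.Icc 0 T, ⟪η t, anticipatedAverage m ((Set.Icc 0 T).indicator g) t⟫ :=
        setIntegral_inner_delayedAverage_indicator m measurableSet_Icc hη2 hg2
    _ = ∫ t in Set.Icc 0 T, ⟪η t, anticipatedAverage m g t⟫ := by
        refine setIntegral_congr_ae measurableSet_Icc ?_
        filter_upwards [ae_anticipatedAverage_eq_indicator_Icc hm_ae hg_zero] with t h ht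
        rw [h ht]

/-- deterministic core of the duality Lemma 4.4. For a finite Borel measure
`m` supported on `[-δ, 0]`, an `L²` function `η` on `[-δ, T]` vanishing a.e. before `0`, and an
`L²` function `g` on `[0, T+δ]` vanishing a.e. after `T`, one has
`∫_0^T ⟨η_δ(t), g(t)⟩ dt = ∫_0^T ⟨η(t), g_{δ+}(t)⟩ dt`, where
`η_δ(t) = ∫ η(t+s) m(ds)` and `g_{δ+}(t) = ∫ g(t-s) m(ds)`. -/
theorem delay_anticipation_duality
    {E : Type*} [NormedAddCommGroup E] [InnerProductSpace ℝ E] [CompleteSpace E]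
    [TopologicalSpace.SeparableSpace E]
    (δ T : ℝ) (hδ : 0 < δ) (hT : 0 < T)
    (m : Measure ℝ) [IsFiniteMeasure m] (hm : m (Set.Icc (-δ) 0)ᶜ = 0)
    (η : ℝ → E)
    (hη_meas : AEStronglyMeasurable η (volume.restrict (Set.Icc (-δ) T)))
    (hη_int : IntegrableOn (fun s => ‖η s‖ ^ 2) (Set.Icc (-δ) T))
    (hη_zero : ∀ᵐ s ∂(volume.restrict (Set.Ico (-δ) 0)), η s = 0)
    (g : ℝ → E)
    (hg_meas : AEStronglyMeasurable g (volume.restrict (Set.Icc 0 (T + δ))))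
    (hg_int : IntegrableOn (fun s => ‖g s‖ ^ 2) (Set.Icc 0 (T + δ)))
    (hg_zero : ∀ᵐ s ∂(volume.restrict (Set.Ioc T (T + δ))), g s = 0) :
    ∫ t in Set.Icc 0 T, ⟪∫ s, η (t + s) ∂m, g t⟫
      = ∫ t in Set.Icc 0 T, ⟪η t, ∫ s, g (t - s) ∂m⟫ :=
  delay_anticipation_duality_general δ T hδ m hm η hη_meas hη_int hη_zero g hg_meas hg_int hg_zero
end
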